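/- Let λ > 1, let Q and Q' be two probability distributions on a three-point space with Q' assigning probabilities (wp, w(1-p), 1-w) and Q assigning probabilities (w[p(1-q)+(1-p)q], w[(1-p)(1-q)+pq], 1-w) to the three points, where w ∈ (0,1], p ∈ (0,1/2), q ∈ (0,1). Then the Rényi divergence of order λ, D_λ(Q‖Q') = (1/(λ-1)) ln Σ_x Q(x)^λ Q'(x)^{1-λ}, satisfies D_λ(Q‖Q') ≤ (q·w/(λ-1)) · (((1-p)/p)^{λ-1} - 1). -/

import Mathlib

/-!
Write `r = (1 - p) / p ≥ 1`. The first two masses of `Q` are those of `Q'` scaled by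
`A = 1 - q + q r` and `B = 1 - q + q / r`, so the Rényi sum is `w (p A^λ + (1 - p) B^λ) + (1 - w)`.
Convexity of `x ↦ x^λ` bounds `A^λ, B^λ` by the mixtures of `1` with `r^λ, r^(-λ)`, and
`p r^λ + (1 - p) r^(-λ) = (1 - p) r^(λ-1) + p r^(1-λ) ≤ r^(λ-1)`. Hence the sum is at most
`1 + q w (r^(λ-1) - 1)`, and `log x ≤ x - 1` finishes.
-/

theorem rpow_mul_rpow_one_sub {c : ℝ} (l : ℝ) (hc : 0 ≤ c) : c ^ l * c ^ (1 - l) = c := by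
  rw [← Real.rpow_add' hc (by norm_num), add_sub_cancel, Real.rpow_one]

theorem mul_rpow_mul_rpow_one_sub {c : ℝ} (a l : ℝ) (hc : 0 ≤ c) (ha : 0 ≤ a) :
    (c * a) ^ l * c ^ (1 - l) = c * a ^ l := by
  rw [Real.mul_rpow hc ha, mul_right_comm, rpow_mul_rpow_one_sub l hc]

theorem rpow_one_sub_add_mul_le {q x l : ℝ} (hq0 : 0 ≤ q) (hq1 : q ≤ 1) (hx : 0 ≤ x)
    (hl : 1 ≤ l) : (1 - q + q * x) ^ l ≤ 1 - q + q * x ^ l := by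
  simpa using (convexOn_rpow hl).2 (Set.mem_Ici.2 zero_le_one) (Set.mem_Ici.2 hx)
    (sub_nonneg.2 hq1) hq0 (by ring)

theorem mul_rpow_odds_add_mul_rpow_inv_odds_le {p l : ℝ} (hp0 : 0 < p) (hp : p ≤ 1 / 2)
    (hl : 1 ≤ l) :
    p * ((1 - p) / p) ^ l + (1 - p) * (p / (1 - p)) ^ l ≤ ((1 - p) / p) ^ (l - 1) := by
  set r := (1 - p) / p with hr
  have hr1 : 1 ≤ r := by rw [hr, le_div_iff₀ hp0]; linarith
  have hr0 : 0 < r := by linarith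
  have hpr : p * r = 1 - p := by rw [hr]; field_simp
  have hinv : p / (1 - p) = r⁻¹ := by rw [hr, inv_div]
  have hodds_pow : p * r ^ l = (1 - p) * r ^ (l - 1) := by
    rw [← hpr, mul_assoc, ← Real.rpow_one_add' hr0.le (by linarith)]
    ring_nf
  have hinv_pow : (1 - p) * r⁻¹ ^ l = p * r ^ (1 - l) := by
    rw [← hpr, Real.inv_rpow hr0.le, Real.rpow_sub hr0, Real.rpow_one]
    field_simp
  have hmono : r ^ (1 - l) ≤ r ^ (l - 1) := Real.rpow_le_rpow_of_exponent_le hr1 (by linarith)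
  rw [hinv, hodds_pow, hinv_pow]
  nlinarith

theorem two_point_mixture_rpow_le {p q l : ℝ} (hp0 : 0 < p) (hp : p ≤ 1 / 2)
    (hq0 : 0 ≤ q) (hq1 : q ≤ 1) (hl : 1 ≤ l) :
    p * (1 - q + q * ((1 - p) / p)) ^ l + (1 - p) * (1 - q + q * (p / (1 - p))) ^ l
      ≤ 1 - q + q * ((1 - p) / p) ^ (l - 1) := by
  have hp1 : 0 ≤ 1 - p := by linarith
  calc p * (1 - q + q * ((1 - p) / p)) ^ l + (1 - p) * (1 - q + q * (p / (1 - p))) ^ l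
      ≤ p * (1 - q + q * ((1 - p) / p) ^ l) + (1 - p) * (1 - q + q * (p / (1 - p)) ^ l) := by
        gcongr
        · exact rpow_one_sub_add_mul_le hq0 hq1 (by positivity) hl
        · exact rpow_one_sub_add_mul_le hq0 hq1 (by positivity) hl
    _ = 1 - q + q * (p * ((1 - p) / p) ^ l + (1 - p) * (p / (1 - p)) ^ l) := by ring
    _ ≤ 1 - q + q * ((1 - p) / p) ^ (l - 1) := by
        gcongr
        exact mul_rpow_odds_add_mul_rpow_inv_odds_le hp0 hp hl

theorem sum_three_point_rpow_eq {w p q l : ℝ} (hw0 : 0 ≤ w) (hw1 : w ≤ 1) (hp0 : 0 < p)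
    (hp1 : p < 1) (hq0 : 0 ≤ q) (hq1 : q ≤ 1) :
    ∑ x, ![w * (p * (1 - q) + (1 - p) * q), w * ((1 - p) * (1 - q) + p * q), 1 - w] x ^ l *
        ![w * p, w * (1 - p), 1 - w] x ^ (1 - l)
      = w * (p * (1 - q + q * ((1 - p) / p)) ^ l
          + (1 - p) * (1 - q + q * (p / (1 - p))) ^ l) + (1 - w) := by
  have h1p : 0 < 1 - p := by linarith
  have hQ0 : w * (p * (1 - q) + (1 - p) * q) = w * p * (1 - q + q * ((1 - p) / p)) := by
    field_simp
  have hQ1 : w * ((1 - p) * (1 - q) + p * q) = w * (1 - p) * (1 - q + q * (p / (1 - p))) := by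
    field_simp
  simp only [Fin.sum_univ_three, Matrix.cons_val_zero, Matrix.cons_val_one, Matrix.cons_val_two,
    Matrix.head_cons, Matrix.tail_cons, hQ0, hQ1]
  rw [mul_rpow_mul_rpow_one_sub _ l (by positivity) (by positivity),
    mul_rpow_mul_rpow_one_sub _ l (by positivity) (by positivity),
    rpow_mul_rpow_one_sub l (sub_nonneg.2 hw1)]
  ring

/-- Rényi divergence bound for the single-bit flipping mechanism on a three-point space.
`Q'` assigns probabilities `(wp, w(1-p), 1-w)` and `Q` assigns
`(w[p(1-q)+(1-p)q], w[(1-p)(1-q)+pq], 1-w)`.  For `λ > 1`,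
`D_λ(Q‖Q') = (1/(λ-1)) ln Σ_x Q(x)^λ Q'(x)^(1-λ) ≤ (qw/(λ-1))(((1-p)/p)^(λ-1) - 1)`. -/
theorem renyi_divergence_three_point_bound (w p q l : ℝ)
    (hw0 : 0 < w) (hw1 : w ≤ 1) (hp0 : 0 < p) (hp : p < 1 / 2)
    (hq0 : 0 < q) (hq1 : q < 1) (hl : 1 < l)
    (Q Q' : Fin 3 → ℝ)
    (hQ' : Q' = ![w * p, w * (1 - p), 1 - w])
    (hQ : Q = ![w * (p * (1 - q) + (1 - p) * q),
                w * ((1 - p) * (1 - q) + p * q), 1 - w]) :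
    (1 / (l - 1)) * Real.log (∑ x, Q x ^ l * Q' x ^ (1 - l))
      ≤ (q * w / (l - 1)) * (((1 - p) / p) ^ (l - 1) - 1) := by
  subst hQ hQ'
  rw [sum_three_point_rpow_eq hw0.le hw1 hp0 (by linarith) hq0.le hq1.le]
  set M := p * (1 - q + q * ((1 - p) / p)) ^ l + (1 - p) * (1 - q + q * (p / (1 - p))) ^ l
  have hM_pos : 0 < M := by
    have hp1 : 0 < 1 - p := by linarith
    positivity
  have hM_le : M ≤ 1 - q + q * ((1 - p) / p) ^ (l - 1) :=
    two_point_mixture_rpow_le hp0 hp.le hq0.le hq1.le hl.le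
  have hlog : Real.log (w * M + (1 - w)) ≤ q * w * (((1 - p) / p) ^ (l - 1) - 1) :=
    calc Real.log (w * M + (1 - w))
        ≤ w * M + (1 - w) - 1 := Real.log_le_sub_one_of_pos (by nlinarith)
      _ ≤ q * w * (((1 - p) / p) ^ (l - 1) - 1) := by nlinarith
  calc (1 / (l - 1)) * Real.log (w * M + (1 - w))
      ≤ (1 / (l - 1)) * (q * w * (((1 - p) / p) ^ (l - 1) - 1)) :=
        mul_le_mul_of_nonneg_left hlog (one_div_nonneg.2 (by linarith))
    _ = (q * w / (l - 1)) * (((1 - p) / p) ^ (l - 1) - 1) := by ring
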